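/- arXiv:1502.06262 — 4 statements merged into one kernel-verified Lean document; each statement's English description precedes it below -/
import Mathlib

section
/- The shift map σ on the Ott-Tomforde-Willis full shift Σ_A over an infinite countable alphabet A is not continuous at the empty sequence Ø. -/
namespace OTW

/-- The Ott-Tomforde-Willis full shift `Σ_A`: sequences over `A ∪ {õ}` (with `õ = none`)
such that once the empty letter `õ` appears, it repeats forever. -/
@[ext]
structure FullShift (A : Type*) where
  val : ℕ → Option A
  tail : ∀ i, val i = none → val (i + 1) = none

variable {A B : Type*}

/-- The shift map `σ`. -/
def shiftMap (x : FullShift A) : FullShift A :=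
  ⟨fun i => x.val (i + 1), fun i hi => x.tail (i + 1) hi⟩

/-- The empty sequence `Ø`. -/
def emptySeq : FullShift A :=
  ⟨fun _ => none, fun _ _ => rfl⟩

theorem val_none_mono (x : FullShift A) :
    ∀ {k m : ℕ}, k ≤ m → x.val k = none → x.val m = none := by
  intro k m h hk
  induction m, h using Nat.le_induction with
  | base => exact hk
  | succ m hm ih => exact x.tail m ih

/-- The finite sequence determined by a word `w : List A`. -/
def finSeq (w : List A) : FullShift A where
  val i := (w.drop i).head?
  tail := by
    intro i hi
    rw [List.head?_eq_none_iff] at hi ⊢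
    rw [List.drop_eq_nil_iff] at hi ⊢
    omega

/-- Generalized cylinder `Z(w, F)`. -/
def Zcyl (w : List A) (F : Finset A) : Set (FullShift A) :=
  {x | (∀ i : Fin w.length, x.val i = some (w.get i)) ∧ ∀ a ∈ F, x.val w.length ≠ some a}

/-- The topology on `Σ_A` generated by the generalized cylinders. -/
instance : TopologicalSpace (FullShift A) :=
  TopologicalSpace.generateFrom {S | ∃ (w : List A) (F : Finset A), S = Zcyl w F}

/-- The letters `L_Λ` used by sequences of `Λ`. -/
def letters (Λ : Set (FullShift A)) : Set A :=
  {a | ∃ x ∈ Λ, ∃ i, x.val i = some a}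

/-- `w` is a (fully lettered) block appearing in some sequence of `Λ`. -/
def IsBlock (Λ : Set (FullShift A)) (w : List A) : Prop :=
  ∃ x ∈ Λ, ∃ n, ∀ i : Fin w.length, x.val (n + i) = some (w.get i)

/-- Ott-Tomforde-Willis shift space: closed, shift invariant, with the
infinite extension property. -/
def IsShiftSpace (Λ : Set (FullShift A)) : Prop :=
  IsClosed Λ ∧ (∀ x ∈ Λ, shiftMap x ∈ Λ) ∧
    (emptySeq ∈ Λ ↔ (letters Λ).Infinite) ∧
    (∀ w : List A, w ≠ [] → (finSeq w ∈ Λ ↔ {b : A | IsBlock Λ (w ++ [b])}.Infinite))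

/-- `x` begins with the block `b` (a word over the extended alphabet `A ∪ {õ}`). -/
def Prefixed (x : FullShift A) (b : List (Option A)) : Prop :=
  ∀ i : Fin b.length, x.val i = b.get i

/-- `(P, Q)` is a representation of `C` as a finitely defined set in `Λ`:
membership in `C` is witnessed by an initial block in `P`, and membership in the
complement by an initial block in `Q`. -/
def FDRep (Λ C : Set (FullShift A)) (P Q : Set (List (Option A))) : Prop :=
  (∀ b ∈ P, b ≠ []) ∧ (∀ b ∈ Q, b ≠ []) ∧
    C = {x ∈ Λ | ∃ b ∈ P, Prefixed x b} ∧
    Λ \ C = {x ∈ Λ | ∃ b ∈ Q, Prefixed x b}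

/-- `C` is a finitely defined set in `Λ`. -/
def FinitelyDefinedIn (Λ C : Set (FullShift A)) : Prop :=
  ∃ P Q, FDRep Λ C P Q

/-- `S` is a finite (possibly empty) union of generalized cylinders of `Λ`. -/
def IsFinUnionCyl (Λ S : Set (FullShift A)) : Prop :=
  ∃ (n : ℕ) (w : Fin n → List A) (F : Fin n → Finset A),
    S = Λ ∩ ⋃ i, Zcyl (w i) (F i)

/-- `Φ` is the sliding block code determined by the partition `{C_a}` of `Λ` into
finitely defined sets, with `C_õ` shift invariant. -/
def IsSBCWith (Λ : Set (FullShift A)) (Φ : FullShift A → FullShift B)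
    (C : Option B → Set (FullShift A)) : Prop :=
  (∀ a, C a ⊆ Λ) ∧ (∀ x ∈ Λ, ∃! a, x ∈ C a) ∧
    (∀ a, FinitelyDefinedIn Λ (C a)) ∧
    (∀ x ∈ C none, shiftMap x ∈ C none) ∧
    (∀ x ∈ Λ, ∀ n : ℕ, shiftMap^[n] x ∈ C ((Φ x).val n))

/-- Sliding block code. -/
def IsSlidingBlockCode (Λ : Set (FullShift A)) (Φ : FullShift A → FullShift B) : Prop :=
  ∃ C, IsSBCWith Λ Φ C

/-- Row-finite shift: every letter has a finite follower set. -/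
def RowFinite (Λ : Set (FullShift A)) : Prop :=
  ∀ a ∈ letters Λ, {b : A | IsBlock Λ [a, b]}.Finite

/-- The `M`-th higher block code `Ξ^(M)`. -/
noncomputable def higherBlock (M : ℕ) (x : FullShift A) : FullShift (Fin M → A) where
  val i := if h : ∀ j : Fin M, (x.val (i + j)).isSome then
      some (fun j => (x.val (i + j)).get (h j)) else none
  tail := by
    intro i hi
    try dsimp only at hi ⊢
    have h1 : ¬ ∀ j : Fin M, (x.val (i + j)).isSome := by
      intro h
      rw [dif_pos h] at hi
      exact Option.some_ne_none _ hi
    push_neg at h1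
    obtain ⟨j, hj⟩ := h1
    have hjn : x.val (i + j) = none := Option.not_isSome_iff_eq_none.mp hj
    have hM : (0 : ℕ) < M := j.pos
    rw [dif_neg]
    intro h2
    have hsome := h2 ⟨M - 1, by omega⟩
    have hnone : x.val (i + 1 + ((⟨M - 1, by omega⟩ : Fin M) : ℕ)) = none := by
      apply val_none_mono x ?_ hjn
      have := j.isLt
      simp only [Fin.val_mk]
      omega
    rw [hnone] at hsome
    simp at hsome

/- Near `Ø` the topology only constrains the first letter, and only to avoid finitely many
values: the sequences `a x` converge to `Ø` as `a` leaves every finite set. Their shifts are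
all equal to `x`, which for `x = a₀ Ø` stays outside the neighbourhood `Z(Ø, {a₀})` of `σ Ø = Ø`. -/

open Filter Topology

def cons (a : A) (x : FullShift A) : FullShift A where
  val
    | 0 => some a
    | i + 1 => x.val i
  tail
    | i + 1, hi => x.tail i hi

@[simp]
theorem shiftMap_cons (a : A) (x : FullShift A) : shiftMap (cons a x) = x := rfl

@[simp]
theorem shiftMap_emptySeq : shiftMap (emptySeq : FullShift A) = emptySeq := rfl

theorem emptySeq_mem_Zcyl_iff {w : List A} {F : Finset A} :
    emptySeq ∈ Zcyl w F ↔ w = [] := by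
  cases w <;> simp [Zcyl, emptySeq]

theorem cons_mem_Zcyl_nil_iff {a : A} {x : FullShift A} {F : Finset A} :
    cons a x ∈ Zcyl [] F ↔ a ∉ F := by
  simp [Zcyl, cons]

theorem isOpen_Zcyl (w : List A) (F : Finset A) : IsOpen (Zcyl w F) :=
  TopologicalSpace.GenerateOpen.basic _ ⟨w, F, rfl⟩

theorem tendsto_cons_cofinite_nhds_emptySeq (x : FullShift A) :
    Tendsto (fun a => cons a x) cofinite (𝓝 emptySeq) := by
  rw [TopologicalSpace.nhds_generateFrom]
  simp only [tendsto_iInf, tendsto_principal]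
  rintro _ ⟨hØ, w, F, rfl⟩
  obtain rfl := emptySeq_mem_Zcyl_iff.mp hØ
  filter_upwards [F.finite_toSet.compl_mem_cofinite] with a ha
  exact cons_mem_Zcyl_nil_iff.mpr ha

theorem shiftMap_not_continuousAt_emptySeq_general (A : Type*) [Infinite A] :
    ¬ ContinuousAt (shiftMap : FullShift A → FullShift A) emptySeq := by
  intro hσ
  obtain ⟨a₀⟩ : Nonempty A := inferInstance
  have hlim : Tendsto (fun _ : A => cons a₀ emptySeq) cofinite
      (𝓝 (emptySeq : FullShift A)) := by
    simpa [Function.comp_def] using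
      hσ.tendsto.comp (tendsto_cons_cofinite_nhds_emptySeq (cons a₀ emptySeq))
  have hZ : Zcyl [] {a₀} ∈ 𝓝 (emptySeq : FullShift A) :=
    (isOpen_Zcyl _ _).mem_nhds (emptySeq_mem_Zcyl_iff.mpr rfl)
  have hmem : cons a₀ emptySeq ∈ Zcyl [] {a₀} :=
    eventually_const.mp (hlim.eventually_mem hZ)
  exact cons_mem_Zcyl_nil_iff.mp hmem (Finset.mem_singleton_self a₀)

/-- the shift map on `Σ_A` (A countably infinite) is not continuous
at the empty sequence `Ø`. -/
theorem shiftMap_not_continuousAt_emptySeq (A : Type*) [Countable A] [Infinite A] :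
    ¬ ContinuousAt (shiftMap : FullShift A → FullShift A) emptySeq :=
  shiftMap_not_continuousAt_emptySeq_general A

end OTW
end

section
/- Any subset of Σ_A consisting only of infinite sequences (and which is nonempty) is not a finitely defined set in Σ_A. -/
/-!
A finitely defined set `C` is recognised by a finite initial block: an infinite sequence `x ∈ C`
begins with some block `b ∈ P` witnessing membership. Cutting `x` off after `|b|` letters gives a
finite sequence that still begins with `b`, hence also lies in `C`, so `C` cannot consist of
infinite sequences only.
-/

namespace OTW

variable {A B : Type*}

namespace FullShift

def truncate (x : FullShift A) (n : ℕ) : FullShift A where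
  val i := if i < n then x.val i else none
  tail i hi := by
    by_cases hin : i + 1 < n
    · rw [if_pos (by omega : i < n)] at hi
      rw [if_pos hin, x.tail i hi]
    · rw [if_neg hin]

theorem truncate_val_of_lt (x : FullShift A) {n i : ℕ} (h : i < n) :
    (truncate x n).val i = x.val i :=
  if_pos h

theorem truncate_val_self (x : FullShift A) (n : ℕ) : (truncate x n).val n = none :=
  if_neg (lt_irrefl n)

end FullShift

open FullShift

theorem Prefixed.truncate {x : FullShift A} {b : List (Option A)} (h : Prefixed x b)
    {n : ℕ} (hn : b.length ≤ n) : Prefixed (truncate x n) b := fun i => by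
  rw [truncate_val_of_lt x (by omega)]
  exact h i

theorem FinitelyDefinedIn.exists_truncate_mem {Λ C : Set (FullShift A)}
    (hC : FinitelyDefinedIn Λ C) {x : FullShift A} (hx : x ∈ C)
    (hΛ : ∀ n, truncate x n ∈ Λ) : ∃ n, truncate x n ∈ C := by
  obtain ⟨P, Q, -, -, hCP, -⟩ := hC
  rw [hCP] at hx ⊢
  obtain ⟨-, b, hbP, hxb⟩ := hx
  exact ⟨b.length, hΛ _, b, hbP, hxb.truncate le_rfl⟩

theorem infinite_seqs_not_finitelyDefined_general {A : Type*}
    (C : Set (FullShift A)) (hne : C.Nonempty)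
    (hinf : ∀ x ∈ C, ∀ k, x.val k ≠ none) :
    ¬ FinitelyDefinedIn Set.univ C := by
  intro hC
  obtain ⟨x, hx⟩ := hne
  obtain ⟨n, hn⟩ := hC.exists_truncate_mem hx fun _ => Set.mem_univ _
  exact hinf _ hn n (truncate_val_self x n)

/-- a nonempty set of infinite sequences is never finitely defined
in `Σ_A`. -/
theorem infinite_seqs_not_finitelyDefined {A : Type*} [Countable A] [Infinite A]
    (C : Set (FullShift A)) (hne : C.Nonempty)
    (hinf : ∀ x ∈ C, ∀ k, x.val k ≠ none) :
    ¬ FinitelyDefinedIn Set.univ C :=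
  infinite_seqs_not_finitelyDefined_general C hne hinf

end OTW
end

section
/- If Φ : Λ → Γ is a sliding block code with Φ(Ø) = Ø, then for every finite sequence x ∈ Λ, the image Φ(x) is a finite sequence in Γ with length l(Φ(x)) ≤ l(x). -/
namespace OTW

variable {A B : Type*}

/-!
The `k`-th coordinate of `Φ x` is the label of the partition piece containing `σᵏ x`. If
`x_k = õ` then `σᵏ x = Ø`, and `Ø` lies in the piece labelled `(Φ Ø)_0 = õ`; since the pieces
are disjoint, `(Φ x)_k = õ`.
-/

theorem shiftMap_iterate_val (n : ℕ) (x : FullShift A) (i : ℕ) :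
    (shiftMap^[n] x).val i = x.val (i + n) := by
  induction n generalizing x with
  | zero => rfl
  | succ n ih =>
    rw [Function.iterate_succ_apply, ih]
    simp only [shiftMap, Nat.add_assoc]

theorem shiftMap_iterate_eq_emptySeq {x : FullShift A} {k : ℕ} (hk : x.val k = none) :
    shiftMap^[k] x = emptySeq := by
  ext1
  funext i
  rw [shiftMap_iterate_val]
  exact val_none_mono x (Nat.le_add_left k i) hk

namespace IsSBCWith

variable {Λ : Set (FullShift A)} {Φ : FullShift A → FullShift B} {C : Option B → Set (FullShift A)}

theorem label_unique (hC : IsSBCWith Λ Φ C) {y : FullShift A} (hy : y ∈ Λ) {a b : Option B}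
    (ha : y ∈ C a) (hb : y ∈ C b) : a = b :=
  (hC.2.1 y hy).unique ha hb

theorem val_eq_of_iterate_eq (hC : IsSBCWith Λ Φ C) {x y : FullShift A} (hx : x ∈ Λ)
    (hy : y ∈ Λ) {n m : ℕ} (hxy : shiftMap^[n] x = shiftMap^[m] y) :
    (Φ x).val n = (Φ y).val m := by
  have hmem : shiftMap^[m] y ∈ Λ := hC.1 _ (hC.2.2.2.2 y hy m)
  exact hC.label_unique hmem (hxy ▸ hC.2.2.2.2 x hx n) (hC.2.2.2.2 y hy m)

end IsSBCWith

theorem slidingBlockCode_finite_to_finite_general {A B : Type*}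
    (Λ : Set (FullShift A))
    (Φ : FullShift A → FullShift B)
    (h : IsSlidingBlockCode Λ Φ) (hO : emptySeq ∈ Λ)
    (hOO : Φ emptySeq = emptySeq) :
    ∀ x ∈ Λ, ∀ k, x.val k = none → (Φ x).val k = none := by
  obtain ⟨C, hC⟩ := h
  intro x hx k hk
  have hshift : shiftMap^[k] x = shiftMap^[0] emptySeq := shiftMap_iterate_eq_emptySeq hk
  rw [hC.val_eq_of_iterate_eq hx hO hshift, hOO]
  rfl

/-- if a sliding block code fixes `Ø`, it maps finite sequences to
finite sequences of length at most the original length (i.e. `x_k = õ` implies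
`(Φ x)_k = õ`). -/
theorem slidingBlockCode_finite_to_finite {A B : Type*} [Countable A] [Infinite A] [Countable B] [Infinite B]
    (Λ : Set (FullShift A)) (Γ : Set (FullShift B))
    (hΛ : IsShiftSpace Λ) (hΓ : IsShiftSpace Γ)
    (Φ : FullShift A → FullShift B) (hmap : Set.MapsTo Φ Λ Γ)
    (h : IsSlidingBlockCode Λ Φ) (hO : emptySeq ∈ Λ)
    (hOO : Φ emptySeq = emptySeq) :
    ∀ x ∈ Λ, ∀ k, x.val k = none → (Φ x).val k = none :=
  slidingBlockCode_finite_to_finite_general Λ Φ h hO hOO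

end OTW
end

section
/- In Σ_A with A countably infinite, for any letter a ∈ A, the set C = {x ∈ Σ_A : x_2 = a} is a finitely defined set which is open but not closed, and its complement is a finitely defined set which is closed but not open. -/
namespace OTW

variable {A B : Type*}

/-! Membership in `C = {x | x₁ = a}` is decided by the initial block `x₀ x₁`, so `C` and its
complement are finitely defined, and `C` is the union of the cylinders `Z(b a, ∅)`, hence open.
It is not closed: a basic neighbourhood `Z(ε, F)` of the empty sequence `Ø` forbids only the
finitely many first letters in `F`, so over an infinite alphabet the finite sequences `b a`
converge to `Ø` as `b` leaves every finite set, while `Ø ∉ C`. -/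

open Filter Topology

def initBlock (x : FullShift A) (n : ℕ) : List (Option A) :=
  List.ofFn fun i : Fin n => x.val i

theorem prefixed_iff_eq_initBlock {x : FullShift A} {b : List (Option A)} :
    Prefixed x b ↔ b = initBlock x b.length := by
  simp only [Prefixed, initBlock, List.ext_get_iff, List.length_ofFn, List.get_ofFn, true_and]
  exact ⟨fun h n h₁ _ => (h ⟨n, h₁⟩).symm, fun h i => (h i i.2 (by simp)).symm⟩

theorem FDRep.symm {Λ C : Set (FullShift A)} {P Q : Set (List (Option A))}
    (h : FDRep Λ C P Q) : FDRep Λ (Λ \ C) Q P := by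
  obtain ⟨hP, hQ, hC, hCc⟩ := h
  have hCΛ : C ⊆ Λ := hC ▸ Set.sep_subset _ _
  exact ⟨hQ, hP, hCc, by rw [Set.sdiff_sdiff_cancel_left hCΛ, hC]⟩

theorem FinitelyDefinedIn.sdiff {Λ C : Set (FullShift A)} (h : FinitelyDefinedIn Λ C) :
    FinitelyDefinedIn Λ (Λ \ C) :=
  let ⟨P, Q, hPQ⟩ := h
  ⟨Q, P, hPQ.symm⟩

theorem FinitelyDefinedIn.compl {C : Set (FullShift A)} (h : FinitelyDefinedIn Set.univ C) :
    FinitelyDefinedIn Set.univ Cᶜ := by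
  simpa only [Set.compl_eq_univ_sdiff] using h.sdiff

theorem finitelyDefinedIn_univ_setOf_initBlock_mem {n : ℕ} (hn : n ≠ 0)
    (S : Set (List (Option A))) : FinitelyDefinedIn Set.univ {x | initBlock x n ∈ S} := by
  have hrep : ∀ T : Set (List (Option A)),
      {x | initBlock x n ∈ T} = {x ∈ Set.univ | ∃ b ∈ {b | b.length = n ∧ b ∈ T}, Prefixed x b} := by
    intro T
    ext x
    simp only [Set.mem_ofPred_eq, Set.mem_univ, true_and, prefixed_iff_eq_initBlock]
    constructor
    · intro hx
      exact ⟨initBlock x n, ⟨by simp [initBlock], hx⟩, by simp [initBlock]⟩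
    · rintro ⟨b, ⟨rfl, hb⟩, hbx⟩
      exact hbx ▸ hb
  have hne : ∀ T : Set (List (Option A)), ∀ b ∈ {b | b.length = n ∧ b ∈ T}, b ≠ [] := by
    rintro T b ⟨hb, -⟩ rfl
    exact hn hb.symm
  refine ⟨_, _, hne S, hne Sᶜ, hrep S, ?_⟩
  rw [← Set.compl_eq_univ_sdiff, ← hrep Sᶜ]
  rfl

theorem isOpen_setOf_val_eq_some (n : ℕ) (a : A) : IsOpen {x : FullShift A | x.val n = some a} := by
  refine isOpen_iff_forall_mem_open.2 fun x hx => ?_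
  have hsome : ∀ i : Fin (n + 1), (x.val i).isSome := fun i =>
    Option.isSome_iff_ne_none.2 fun hi => by
      simp [val_none_mono x (Nat.lt_succ_iff.1 i.2) hi] at hx
  set w : List A := List.ofFn fun i : Fin (n + 1) => (x.val i).get (hsome i)
  have hxw : ∀ i : Fin w.length, x.val i = some (w.get i) := fun i => by
    simp only [w, List.get_ofFn]
    exact (Option.some_get _).symm
  refine ⟨Zcyl w ∅, fun y hy => ?_, isOpen_Zcyl w ∅, ⟨hxw, by simp⟩⟩
  have hn : n < w.length := by simp [w]
  exact ((hy.1 ⟨n, hn⟩).trans (hxw ⟨n, hn⟩).symm).trans hx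

theorem tendsto_nhds_emptySeq {ι : Type*} {l : Filter ι} {y : ι → FullShift A}
    (h : ∀ c, ∀ᶠ i in l, (y i).val 0 ≠ some c) : Tendsto y l (𝓝 emptySeq) := by
  rw [TopologicalSpace.nhds_generateFrom]
  refine tendsto_iInf.2 fun U => tendsto_iInf.2 fun ⟨hU, w, F, hUw⟩ => tendsto_principal.2 ?_
  subst hUw
  cases w with
  | cons c w => simpa [emptySeq] using hU.1 ⟨0, by simp⟩
  | nil =>
    filter_upwards [(F.eventually_all).2 fun c _ => h c] with i hi
    exact ⟨fun i => i.elim0, hi⟩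

theorem finitelyDefinedIn_univ_setOf_val_eq (n : ℕ) (o : Option A) :
    FinitelyDefinedIn Set.univ {x : FullShift A | x.val n = o} := by
  convert finitelyDefinedIn_univ_setOf_initBlock_mem n.succ_ne_zero {b | b[n]? = some o} using 3
  simp only [initBlock, Set.mem_ofPred_eq, List.getElem?_ofFn]
  rw [dif_pos n.lt_succ_self, Option.some_inj]

theorem emptySeq_mem_closure_setOf_val_succ_eq_some [Infinite A] (n : ℕ) (a : A) :
    emptySeq ∈ closure {x : FullShift A | x.val (n + 1) = some a} := by
  have hlim : Tendsto (fun b => finSeq (b :: List.replicate (n + 1) a)) cofinite (𝓝 emptySeq) :=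
    tendsto_nhds_emptySeq fun c => (eventually_cofinite_ne c).mono fun b hb => by
      simpa [finSeq] using hb
  exact mem_closure_of_tendsto hlim (Eventually.of_forall fun b => by simp [finSeq])

theorem not_isClosed_setOf_val_succ_eq_some [Infinite A] (n : ℕ) (a : A) :
    ¬ IsClosed {x : FullShift A | x.val (n + 1) = some a} := fun h => by
  simpa [emptySeq] using h.closure_subset (emptySeq_mem_closure_setOf_val_succ_eq_some n a)

theorem coordinate_set_finitelyDefined_open_not_closed_general {A : Type*} [Infinite A]
    (a : A) (C : Set (FullShift A)) (hC : C = {x : FullShift A | x.val 1 = some a}) :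
    FinitelyDefinedIn Set.univ C ∧ IsOpen C ∧ ¬ IsClosed C ∧
    FinitelyDefinedIn Set.univ Cᶜ ∧ IsClosed Cᶜ ∧ ¬ IsOpen Cᶜ := by
  subst hC
  have hFD := finitelyDefinedIn_univ_setOf_val_eq 1 (some a)
  have hOpen := isOpen_setOf_val_eq_some 1 a
  have hNotClosed := not_isClosed_setOf_val_succ_eq_some 0 a
  exact ⟨hFD, hOpen, hNotClosed, hFD.compl, isClosed_compl_iff.2 hOpen,
    fun h => hNotClosed (isOpen_compl_iff.1 h)⟩

/-- in `Σ_A` with `A` countably infinite, `C = {x : x_2 = a}` is a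
finitely defined set which is open but not closed, and `Cᶜ` is a finitely defined
set which is closed but not open. -/
theorem coordinate_set_finitelyDefined_open_not_closed {A : Type*} [Countable A] [Infinite A]
    (a : A) (C : Set (FullShift A)) (hC : C = {x : FullShift A | x.val 1 = some a}) :
    FinitelyDefinedIn Set.univ C ∧ IsOpen C ∧ ¬ IsClosed C ∧
    FinitelyDefinedIn Set.univ Cᶜ ∧ IsClosed Cᶜ ∧ ¬ IsOpen Cᶜ :=
  coordinate_set_finitelyDefined_open_not_closed_general a C hC

end OTW
end
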